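/- Fix an integer n ≥ 3 and nonnegative integers k_1,…,k_{n−1} with |k| := k_1+⋯+k_{n−1}. For integers g large enough that 4g+2n−2−|k| ≥ 0, define Β(g) := b_{k_1,…,k_{n−1}, 4g+2n−2−|k|} / (2·(4g+2n−5)!!). Then as g → ∞, Β(g) converges, with limit (1+(−1)^n)/2 if (k_1,…,k_{n−1}) = (0,0,…,0); limit −(−1)^n/2 if (k_1,…,k_{n−1}) = (0,…,0,1); limit −1/2 if (k_1,…,k_{n−1}) = (1,0,…,0); and limit 0 for every other choice of (k_1,…,k_{n−1}). -/

import Mathlib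

/-!
Put `M = B_{k_1} ⋯ B_{k_{n-1}}`, a matrix independent of `g`, and `K = 4g + 2n - 2 - |k|`.
Since `B_K` is diagonal with entries `±c_K N` for even `K` and antidiagonal for odd `K`,
`b_{k,K} = [N^1] tr(M B_K)` is `(K-1)!!` (for even `K`) or `(K-2)!!` (for odd `K`) times a
factor bounded in terms of `M` alone. For `|k| ≥ 2` this is `O((4g+2n-5)!!/g)`, so the
normalized sequence tends to `0`. For `|k| ≤ 1` the matrix `M` is `B_0`, `B_1 B_0`, `B_0 B_1`
or `B_0 B_1 B_0 = 0` (as `B_0` is idempotent), which gives the four limits.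
-/

/-- Double factorial on naturals: `0!! = 1`, `1!! = 1`, `(k+2)!! = (k+2)·k!!`. -/
def df : ℕ → ℕ
  | 0 => 1
  | 1 => 1
  | k + 2 => (k + 2) * df k

/-- Double factorial of an integer, with `z!! = 1` for `z ≤ 0` (so `(-1)!! = 0!! = 1`). -/
def dfacZ (z : ℤ) : ℤ := if z ≤ 0 then 1 else (df z.toNat : ℤ)

/-- The matrices `L_k`. -/
noncomputable def Lmat (k : ℕ) : Matrix (Fin 2) (Fin 2) ℝ :=
  if k = 0 then !![1, 0; 0, 0]
  else if k % 2 = 0 then !![(df (k - 1) : ℝ), 0; 0, -(df (k - 1) : ℝ)]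
  else !![0, -(df k : ℝ); (df (k - 2) : ℝ), 0]

/-- `l_{k_1,…,k_m} = tr(L_{k_1}⋯L_{k_m})` if all indices are nonnegative, else `0`. -/
noncomputable def lSeq (m : ℕ) (k : Fin m → ℤ) : ℝ :=
  if ∀ q, 0 ≤ k q then Matrix.trace ((List.ofFn fun q => Lmat (k q).toNat).prod) else 0

/-- The matrices `B_k`, with entries in `ℚ[N]`. -/
noncomputable def Bmat (k : ℕ) : Matrix (Fin 2) (Fin 2) (Polynomial ℚ) :=
  if k = 0 then !![1, 0; 0, 0]
  else if k % 2 = 0 then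
    !![Polynomial.C ((df (k - 1) : ℚ) * (1 + (-1 : ℚ) ^ ((k - 2) / 2)) / (k : ℚ)) * Polynomial.X, 0;
       0, -(Polynomial.C ((df (k - 1) : ℚ) * (1 + (-1 : ℚ) ^ ((k - 2) / 2)) / (k : ℚ)) * Polynomial.X)]
  else
    !![0, -(Polynomial.C ((df (k - 2) : ℚ)) * Polynomial.X);
       Polynomial.C ((df (k - 2) : ℚ) * (-1 : ℚ) ^ ((k - 1) / 2)), 0]

/-- `b_{k_1,…,k_m} = [N^1] tr(B_{k_1}⋯B_{k_m})` if all indices are nonnegative, else `0`. -/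
noncomputable def bSeq (m : ℕ) (k : Fin m → ℤ) : ℚ :=
  if ∀ q, 0 ≤ k q then (Matrix.trace ((List.ofFn fun q => Bmat (k q).toNat).prod)).coeff 1 else 0

/-- `J_{σ,q}(j)`: `-j-1` if `σ(q) < σ(q+1)`, and `j` if `σ(q) > σ(q+1)` (indices cyclic). -/
def Jfun {m : ℕ} [NeZero m] (σ : Equiv.Perm (Fin m)) (q : Fin m) (j : ℕ) : ℤ :=
  if σ q < σ (q + 1) then -(j : ℤ) - 1 else (j : ℤ)

/-- `K_{i,σ,q}(j) = i_{σ(q)} + J_{σ,q}(j_q) − J_{σ,q−1}(j_{q−1})`, indices cyclic. -/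
def Kfun {m : ℕ} [NeZero m] (i : Fin m → ℤ) (σ : Equiv.Perm (Fin m)) (j : Fin m → ℕ)
    (q : Fin m) : ℤ :=
  i (σ q) + Jfun σ q (j q) - Jfun σ (q - 1) (j (q - 1))

/-- `m(σ) = #{q : σ(q+1) < σ(q)}` (indices cyclic). -/
def mcount {m : ℕ} [NeZero m] (σ : Equiv.Perm (Fin m)) : ℕ :=
  (Finset.univ.filter fun q : Fin m => σ (q + 1) < σ q).card

/-- The normalized enumeration `𝒢^og` of ordinary graphs, via Lemma 2.2:
`𝒢^og(g) = (1/(m·(2g+2m−3)!!)) Σ_σ (−1)^{m(σ)+1} Σ_j l_{K_{i,σ,1}(j),…,K_{i,σ,m}(j)}`. -/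
noncomputable def Gog (m : ℕ) [NeZero m] (i : Fin m → ℤ) (g : ℤ) : ℝ :=
  (1 / ((m : ℝ) * (dfacZ (2 * g + 2 * m - 3) : ℝ))) *
    ∑ σ : Equiv.Perm (Fin m), (-1 : ℝ) ^ (mcount σ + 1) *
      ∑' j : Fin m → ℕ, lSeq m (Kfun i σ j)

/-- The normalized enumeration `𝒢^rg` of ribbon graphs with one face, via Lemma 3.1:
`𝒢^rg(g) = (1/(2m·(4g+2m−5)!!)) Σ_σ (−1)^{m(σ)+1} Σ_j b_{K_{i,σ,1}(j),…,K_{i,σ,m}(j)}`. -/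
noncomputable def Grg (m : ℕ) [NeZero m] (i : Fin m → ℤ) (g : ℤ) : ℝ :=
  (1 / (2 * (m : ℝ) * (dfacZ (4 * g + 2 * m - 5) : ℝ))) *
    ∑ σ : Equiv.Perm (Fin m), (-1 : ℝ) ^ (mcount σ + 1) *
      ∑' j : Fin m → ℕ, ((bSeq m (Kfun i σ j) : ℚ) : ℝ)

/-- `σ ∈ S_{n+2}^{(r,n+2−r)}`: unimodal permutations of `{0,…,n+1}` fixing the last point,
strictly decreasing on positions `0,…,n+1−r` down to the value `0`, then strictly increasing
on positions `n+1−r,…,n+1` up to the value `n+1`. -/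
def SPerm (n r : ℕ) (σ : Equiv.Perm (Fin (n + 2))) : Prop :=
  σ (Fin.last (n + 1)) = Fin.last (n + 1) ∧
  σ ⟨n + 1 - r, by omega⟩ = ⟨0, by omega⟩ ∧
  (∀ a b : Fin (n + 2), a < b → b.val ≤ n + 1 - r → σ b < σ a) ∧
  (∀ a b : Fin (n + 2), n + 1 - r ≤ a.val → a < b → σ a < σ b)

/-- `σ ∈ S_{n+2}^{{2}} = ∪_{r=1}^{n+1} S_{n+2}^{(r,n+2−r)}`. -/
def inS2 (n : ℕ) (σ : Equiv.Perm (Fin (n + 2))) : Prop :=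
  ∃ r, 1 ≤ r ∧ r ≤ n + 1 ∧ SPerm n r σ

open Polynomial Filter Matrix Topology

section SingleOne

variable {ι : Type*} {k : ι → ℕ}

lemma sum_eq_one_of_eq_one_of_forall_ne [Fintype ι] {q : ι} (hq : k q = 1)
    (hk : ∀ p, p ≠ q → k p = 0) : ∑ p, k p = 1 := by
  rw [Finset.sum_eq_single q (fun p _ hp => hk p hp) (by simp), hq]

lemma eq_one_and_forall_ne_iff {q : ι} (hq : k q = 1) (hk : ∀ p, p ≠ q → k p = 0) (q' : ι) :
    (k q' = 1 ∧ ∀ p, p ≠ q' → k p = 0) ↔ q = q' := by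
  refine ⟨fun h => by_contra fun hne => ?_, fun h => h ▸ ⟨hq, hk⟩⟩
  simp [hk q' (Ne.symm hne)] at h

lemma forall_eq_zero_or_exists_single_of_sum_lt_two [Fintype ι] [DecidableEq ι]
    (hs : ∑ p, k p < 2) : (∀ p, k p = 0) ∨ ∃ q, k q = 1 ∧ ∀ p, p ≠ q → k p = 0 := by
  refine or_iff_not_imp_left.mpr fun h0 => ?_
  obtain ⟨q, hq⟩ := not_forall.mp h0
  have hsplit := Finset.add_sum_erase Finset.univ k (Finset.mem_univ q)
  have hrest : ∑ p ∈ Finset.univ.erase q, k p = 0 := by omega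
  refine ⟨q, by omega, fun p hp => ?_⟩
  exact Finset.sum_eq_zero_iff.mp hrest p (Finset.mem_erase.mpr ⟨hp, Finset.mem_univ p⟩)

end SingleOne

lemma df_pos (n : ℕ) : 0 < df n := by
  induction n using df.induct with
  | case1 | case2 => simp [df]
  | case3 k ih => simp only [df]; positivity

lemma df_add_two (k : ℕ) : df (k + 2) = (k + 2) * df k := rfl

lemma df_le_df_add_two_mul (k j : ℕ) : df k ≤ df (k + 2 * j) := by
  induction j with
  | zero => rfl
  | succ j ih =>
    rw [Nat.mul_succ, ← add_assoc, df_add_two]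
    exact ih.trans (Nat.le_mul_of_pos_left _ (by omega))

lemma df_sub_two_mul_le (k : ℕ) : df (k - 2) * k ≤ df k := by
  rcases k with _ | _ | k
  · simp
  · simp [df]
  · exact (mul_comm _ _).le

lemma Bmat_zero : Bmat 0 = !![1, 0; 0, 0] := by simp [Bmat]

lemma Bmat_one : Bmat 1 = !![0, -X; 1, 0] := by simp [Bmat, df]

lemma Bmat_of_even {K : ℕ} (hK : Even K) (hK0 : K ≠ 0) :
    Bmat K = !![C ((df (K - 1) : ℚ) * (1 + (-1) ^ ((K - 2) / 2)) / K) * X, 0;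
       0, -(C ((df (K - 1) : ℚ) * (1 + (-1) ^ ((K - 2) / 2)) / K) * X)] := by
  rw [Bmat, if_neg hK0, if_pos (Nat.even_iff.mp hK)]

lemma Bmat_of_odd {K : ℕ} (hK : Odd K) :
    Bmat K =
      !![0, -(C (df (K - 2) : ℚ) * X); C ((df (K - 2) : ℚ) * (-1) ^ ((K - 1) / 2)), 0] := by
  have := Nat.odd_iff.mp hK
  rw [Bmat, if_neg (by omega), if_neg (by omega)]

lemma isIdempotentElem_Bmat_zero : IsIdempotentElem (Bmat 0) := by
  rw [IsIdempotentElem, Bmat_zero, mul_fin_two]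
  simp

lemma Bmat_zero_mul_Bmat_one_mul_Bmat_zero : Bmat 0 * Bmat 1 * Bmat 0 = 0 := by
  ext i j
  fin_cases i <;> fin_cases j <;> simp [Bmat_zero, Bmat_one, mul_apply, Fin.sum_univ_two]

lemma coeff_one_trace_mul_diag (M : Matrix (Fin 2) (Fin 2) ℚ[X]) (c : ℚ) :
    (trace (M * !![C c * X, 0; 0, -(C c * X)])).coeff 1 =
      c * ((M 0 0).coeff 0 - (M 1 1).coeff 0) := by
  simp [trace_fin_two, mul_apply, ← mul_assoc]
  ring

lemma coeff_one_trace_mul_antidiag (M : Matrix (Fin 2) (Fin 2) ℚ[X]) (c d : ℚ) :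
    (trace (M * !![0, -(C c * X); C d, 0])).coeff 1 =
      d * (M 0 1).coeff 1 - c * (M 1 0).coeff 0 := by
  simp [trace_fin_two, mul_apply, ← mul_assoc, coeff_mul_C]
  ring

lemma coeff_one_trace_mul_Bmat_of_even (M : Matrix (Fin 2) (Fin 2) ℚ[X]) {K : ℕ} (hK : Even K)
    (hK0 : K ≠ 0) :
    (trace (M * Bmat K)).coeff 1 =
      df (K - 1) * (1 + (-1) ^ ((K - 2) / 2)) / K * ((M 0 0).coeff 0 - (M 1 1).coeff 0) := by
  rw [Bmat_of_even hK hK0, coeff_one_trace_mul_diag]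

lemma coeff_one_trace_mul_Bmat_of_odd (M : Matrix (Fin 2) (Fin 2) ℚ[X]) {K : ℕ} (hK : Odd K) :
    (trace (M * Bmat K)).coeff 1 =
      df (K - 2) * ((-1) ^ ((K - 1) / 2) * (M 0 1).coeff 1 - (M 1 0).coeff 0) := by
  rw [Bmat_of_odd hK, coeff_one_trace_mul_antidiag]
  ring

noncomputable def Bprod {r : ℕ} (k : Fin r → ℕ) : Matrix (Fin 2) (Fin 2) ℚ[X] :=
  (List.ofFn fun p => Bmat (k p)).prod

lemma Bprod_of_forall_eq_zero {r : ℕ} {k : Fin (r + 1) → ℕ} (hk : ∀ p, k p = 0) :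
    Bprod k = Bmat 0 := by
  simp only [Bprod, hk, List.ofFn_const, List.prod_replicate]
  exact isIdempotentElem_Bmat_zero.pow_succ_eq r

lemma Bprod_eq_pow_mul_Bmat_one_mul_pow {r : ℕ} {k : Fin r → ℕ} {q : Fin r} (hq : k q = 1)
    (hk : ∀ p, p ≠ q → k p = 0) :
    Bprod k = Bmat 0 ^ (q : ℕ) * Bmat 1 * Bmat 0 ^ (r - 1 - q) := by
  induction r with
  | zero => exact q.elim0
  | succ r ih =>
    rw [Bprod, List.ofFn_succ', List.prod_concat]
    induction q using Fin.lastCases with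
    | last =>
      have : ∀ p : Fin r, k p.castSucc = 0 := fun p => hk _ (Fin.castSucc_lt_last p).ne
      simp [this, hq, List.ofFn_const]
    | cast q =>
      rw [← Bprod, ih (k := fun p => k p.castSucc) hq (fun p hp => hk _ (by simpa using hp)),
        hk _ (Fin.castSucc_lt_last q).ne', Fin.val_castSucc,
        show r + 1 - 1 - q = r - 1 - q + 1 by omega, pow_succ, mul_assoc]

lemma bSeq_snoc {r : ℕ} (k : Fin r → ℕ) (K : ℕ) :
    bSeq (r + 1) (Fin.snoc (fun p => (k p : ℤ)) (K : ℤ)) =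
      (trace (Bprod k * Bmat K)).coeff 1 := by
  have hnonneg (q : Fin (r + 1)) : 0 ≤ (Fin.snoc (fun p => (k p : ℤ)) (K : ℤ) : _ → ℤ) q := by
    induction q using Fin.lastCases <;> simp
  rw [bSeq, if_pos hnonneg, List.ofFn_succ', List.prod_concat, Bprod]
  simp

/-- `Β(g)`, along natural `g`. -/
noncomputable def bNormalized (m : ℕ) (k : Fin (m + 2) → ℕ) (g : ℕ) : ℝ :=
  ((bSeq (m + 3)
      (Fin.snoc (fun p => (k p : ℤ))
        (4 * (g : ℤ) + 2 * (m + 3 : ℕ) - 2 - ∑ p, (k p : ℤ))) : ℚ) : ℝ) /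
    (2 * (dfacZ (4 * (g : ℤ) + 2 * (m + 3 : ℕ) - 5) : ℝ))

lemma bNormalized_eq {m : ℕ} (k : Fin (m + 2) → ℕ) {g : ℕ}
    (hg : ∑ p, k p ≤ 4 * g + 2 * m + 4) :
    bNormalized m k g =
      ((trace (Bprod k * Bmat (4 * g + 2 * m + 4 - ∑ p, k p))).coeff 1 : ℝ) /
        (2 * df (4 * g + 2 * m + 1)) := by
  have hlast : 4 * (g : ℤ) + 2 * (m + 3 : ℕ) - 2 - ∑ p, (k p : ℤ) =
      ((4 * g + 2 * m + 4 - ∑ p, k p : ℕ) : ℤ) := by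
    push_cast [Nat.cast_sub hg]; ring
  have hdf : dfacZ (4 * (g : ℤ) + 2 * (m + 3 : ℕ) - 5) = df (4 * g + 2 * m + 1) := by
    rw [dfacZ, if_neg (by omega), show 4 * (g : ℤ) + 2 * (m + 3 : ℕ) - 5 =
      ((4 * g + 2 * m + 1 : ℕ) : ℤ) by push_cast; ring, Int.toNat_natCast]
  rw [bNormalized, hlast, bSeq_snoc, hdf]
  push_cast
  rfl

lemma abs_coeff_one_trace_mul_Bmat_mul_le (M : Matrix (Fin 2) (Fin 2) ℚ[X]) {K s : ℕ}
    (hs : 2 ≤ s) (hK : K ≠ 0) (hpar : K % 2 = s % 2) :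
    |(trace (M * Bmat K)).coeff 1| * K ≤
      (2 * |(M 0 0).coeff 0 - (M 1 1).coeff 0| + |(M 0 1).coeff 1| + |(M 1 0).coeff 0|) *
        df (K + s - 3) := by
  set D := (M 0 0).coeff 0 - (M 1 1).coeff 0
  set a := (M 0 1).coeff 1
  set b := (M 1 0).coeff 0
  rcases Nat.even_or_odd K with hKe | hKo
  · have hdf : (df (K - 1) : ℚ) ≤ df (K + s - 3) := by
      have := df_le_df_add_two_mul (K - 1) ((s - 2) / 2)
      rw [show K - 1 + 2 * ((s - 2) / 2) = K + s - 3 by grind] at this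
      exact_mod_cast this
    have hsign : |1 + (-1 : ℚ) ^ ((K - 2) / 2)| ≤ 2 :=
      (abs_add_le _ _).trans (by rw [abs_one, abs_neg_one_pow]; norm_num)
    calc |(trace (M * Bmat K)).coeff 1| * K
        = df (K - 1) * |1 + (-1 : ℚ) ^ ((K - 2) / 2)| * |D| := by
          rw [coeff_one_trace_mul_Bmat_of_even M hKe hK, abs_mul, abs_div, abs_mul,
            Nat.abs_cast, Nat.abs_cast]
          field_simp
          rfl
      _ ≤ df (K + s - 3) * 2 * |D| := by gcongr
      _ ≤ (2 * |D| + |a| + |b|) * df (K + s - 3) := by nlinarith [abs_nonneg a, abs_nonneg b]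
  · have hdf : (df (K - 2) : ℚ) * K ≤ df (K + s - 3) := by
      have := df_le_df_add_two_mul K ((s - 3) / 2)
      rw [show K + 2 * ((s - 3) / 2) = K + s - 3 by grind] at this
      exact_mod_cast (df_sub_two_mul_le K).trans this
    calc |(trace (M * Bmat K)).coeff 1| * K
        ≤ df (K - 2) * (|a| + |b|) * K := by
          rw [coeff_one_trace_mul_Bmat_of_odd M hKo, abs_mul, Nat.abs_cast]
          gcongr
          exact (abs_sub _ _).trans (by rw [abs_mul, abs_neg_one_pow, one_mul])
      _ ≤ df (K + s - 3) * (|a| + |b|) := by rw [mul_right_comm]; gcongr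
      _ ≤ (2 * |D| + |a| + |b|) * df (K + s - 3) := by nlinarith [abs_nonneg D]

lemma tendsto_bNormalized_of_forall_eq_zero {m : ℕ} {k : Fin (m + 2) → ℕ}
    (hk : ∀ p, k p = 0) :
    Tendsto (bNormalized m k) atTop (𝓝 ((1 + (-1 : ℝ) ^ (m + 3)) / 2)) := by
  have hs : ∑ p, k p = 0 := by simp [hk]
  have hval (g : ℕ) : bNormalized m k g =
      ((4 * g + 2 * m + 3 : ℕ) : ℝ) / ((4 * g + 2 * m + 3 : ℕ) + 1) *
        ((1 + (-1) ^ (m + 3)) / 2) := by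
    have hsign : (-1 : ℚ) ^ ((4 * g + 2 * m + 4 - 2) / 2) = (-1) ^ (m + 3) :=
      neg_one_pow_congr (by rw [Nat.even_iff, Nat.even_iff]; omega)
    have hdf := df_pos (4 * g + 2 * m + 1)
    rw [bNormalized_eq k (by omega), hs, Nat.sub_zero, Bprod_of_forall_eq_zero hk,
      coeff_one_trace_mul_Bmat_of_even _ ⟨2 * g + m + 2, by ring⟩ (by omega), hsign,
      show 4 * g + 2 * m + 4 - 1 = 4 * g + 2 * m + 1 + 2 by omega, df_add_two]
    simp [Bmat_zero]
    field_simp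
    ring
  have hK : Tendsto (fun g : ℕ => 4 * g + 2 * m + 3) atTop atTop :=
    tendsto_atTop_mono (fun g => (by omega : g ≤ 4 * g + 2 * m + 3)) tendsto_id
  have hlim := ((tendsto_natCast_div_add_atTop (1 : ℝ)).comp hK).mul_const
    ((1 + (-1 : ℝ) ^ (m + 3)) / 2)
  rw [one_mul] at hlim
  exact hlim.congr fun g => (hval g).symm

lemma bNormalized_of_sum_eq_one {m : ℕ} {k : Fin (m + 2) → ℕ} (hs : ∑ p, k p = 1)
    (g : ℕ) :
    bNormalized m k g =
      ((-1) ^ (m + 3) * ((Bprod k 0 1).coeff 1 : ℝ) - (Bprod k 1 0).coeff 0) / 2 := by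
  have hsign : (-1 : ℚ) ^ ((4 * g + 2 * m + 3 - 1) / 2) = (-1) ^ (m + 3) :=
    neg_one_pow_congr (by rw [Nat.even_iff, Nat.even_iff]; omega)
  have hdf := df_pos (4 * g + 2 * m + 1)
  rw [bNormalized_eq k (by omega), hs, show 4 * g + 2 * m + 4 - 1 = 4 * g + 2 * m + 3 by omega,
    coeff_one_trace_mul_Bmat_of_odd _ ⟨2 * g + m + 1, by ring⟩, hsign,
    show 4 * g + 2 * m + 3 - 2 = 4 * g + 2 * m + 1 by omega]
  push_cast
  field_simp

lemma Bprod_of_eq_one_of_forall_ne {m : ℕ} {k : Fin (m + 2) → ℕ} {q : Fin (m + 2)}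
    (hq : k q = 1) (hk : ∀ p, p ≠ q → k p = 0) :
    Bprod k =
      if q = Fin.last (m + 1) then !![0, -X; 0, 0] else if q = 0 then !![0, 0; 1, 0] else 0 := by
  have hB := isIdempotentElem_Bmat_zero
  rw [Bprod_eq_pow_mul_Bmat_one_mul_pow hq hk]
  split_ifs with hlast hzero
  · rw [hlast, Fin.val_last, show m + 2 - 1 - (m + 1) = 0 by omega, pow_zero, mul_one,
      hB.pow_succ_eq, Bmat_zero, Bmat_one, mul_fin_two]
    simp
  · rw [hzero, Fin.val_zero, pow_zero, one_mul, show m + 2 - 1 - 0 = m + 1 by omega,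
      hB.pow_succ_eq, Bmat_zero, Bmat_one, mul_fin_two]
    simp
  · obtain ⟨a, ha⟩ : ∃ a, (q : ℕ) = a + 1 :=
      Nat.exists_eq_add_one.mpr (Fin.pos_iff_ne_zero.mpr hzero)
    obtain ⟨b, hb⟩ : ∃ b, m + 2 - 1 - q = b + 1 :=
      Nat.exists_eq_add_one.mpr (by have := Fin.val_lt_last hlast; omega)
    rw [hb, ha, hB.pow_succ_eq, hB.pow_succ_eq, Bmat_zero_mul_Bmat_one_mul_Bmat_zero]

lemma tendsto_bNormalized_of_two_le_sum {m : ℕ} {k : Fin (m + 2) → ℕ}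
    (hs : 2 ≤ ∑ p, k p) :
    Tendsto (bNormalized m k) atTop (𝓝 0) := by
  set M := Bprod k
  set C : ℚ :=
    2 * |(M 0 0).coeff 0 - (M 1 1).coeff 0| + |(M 0 1).coeff 1| + |(M 1 0).coeff 0|
  refine squeeze_zero_norm' ?_ (tendsto_const_div_atTop_nhds_zero_nat (C : ℝ))
  filter_upwards [eventually_ge_atTop (∑ p, k p)] with g hg
  rw [bNormalized_eq k (by omega)]
  set K := 4 * g + 2 * m + 4 - ∑ p, k p
  set x := (trace (M * Bmat K)).coeff 1
  have hbound : |x| * K ≤ C * df (4 * g + 2 * m + 1) := by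
    have := abs_coeff_one_trace_mul_Bmat_mul_le M hs (K := K) (by omega) (by omega)
    rwa [show K + ∑ p, k p - 3 = 4 * g + 2 * m + 1 by omega] at this
  have hgK : (g : ℚ) ≤ K := by exact_mod_cast (by omega : g ≤ K)
  have hxg : |x| * g ≤ C * (2 * df (4 * g + 2 * m + 1)) := by nlinarith [abs_nonneg x]
  have hdfR : (0 : ℝ) < 2 * df (4 * g + 2 * m + 1) := by
    have := df_pos (4 * g + 2 * m + 1)
    exact_mod_cast (by omega : 0 < 2 * df (4 * g + 2 * m + 1))
  rw [Real.norm_eq_abs, abs_div, abs_of_pos hdfR,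
    div_le_div_iff₀ hdfR (by exact_mod_cast (by omega : 0 < g))]
  exact_mod_cast hxg


/-- Limit (3.7) in the paper (paper `n = m+3 ≥ 3`): for fixed nonnegative `k_1,…,k_{n−1}`,
`b_{k_1,…,k_{n−1},4g+2n−2−|k|}/(2·(4g+2n−5)!!)` converges as `g → ∞`, to `(1+(−1)^n)/2` if all
`k_p = 0`, to `−(−1)^n/2` if `(k_1,…,k_{n−1}) = (0,…,0,1)`, to `−1/2` if
`(k_1,…,k_{n−1}) = (1,0,…,0)`, and to `0` otherwise. -/
theorem bSeq_normalized_limit (m : ℕ) (k : Fin (m + 2) → ℕ) :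
    Filter.Tendsto
      (fun g : ℤ =>
        ((bSeq (m + 3)
            (Fin.snoc (fun p => (k p : ℤ)) (4 * g + 2 * (m + 3 : ℕ) - 2 - ∑ p, (k p : ℤ))) : ℚ) : ℝ) /
          (2 * (dfacZ (4 * g + 2 * (m + 3 : ℕ) - 5) : ℝ)))
      Filter.atTop
      (nhds (if ∀ p, k p = 0 then (1 + (-1 : ℝ) ^ (m + 3 : ℕ)) / 2
        else if k (Fin.last (m + 1)) = 1 ∧ ∀ p, p ≠ Fin.last (m + 1) → k p = 0 then
          -(-1 : ℝ) ^ (m + 3 : ℕ) / 2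
        else if k 0 = 1 ∧ ∀ p, p ≠ 0 → k p = 0 then -(1 / 2) else 0)) := by
  rw [← Nat.map_cast_int_atTop, tendsto_map'_iff]
  change Tendsto (bNormalized m k) atTop _
  rcases lt_or_ge (∑ p, k p) 2 with hs | hs
  · rcases forall_eq_zero_or_exists_single_of_sum_lt_two hs with h0 | ⟨q, hq, hk⟩
    · rw [if_pos h0]
      exact tendsto_bNormalized_of_forall_eq_zero h0
    · rw [if_neg fun h0 => by simp [h0] at hq]
      simp only [eq_one_and_forall_ne_iff hq hk]
      refine tendsto_const_nhds.congr fun g => ?_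
      rw [bNormalized_of_sum_eq_one (sum_eq_one_of_eq_one_of_forall_ne hq hk),
        Bprod_of_eq_one_of_forall_ne hq hk]
      split_ifs <;> norm_num
  · have hsingle (q) : ¬(k q = 1 ∧ ∀ p, p ≠ q → k p = 0) := fun h => by
      have := sum_eq_one_of_eq_one_of_forall_ne h.1 h.2
      omega
    rw [if_neg fun h0 => by simp [h0] at hs, if_neg (hsingle _), if_neg (hsingle _)]
    exact tendsto_bNormalized_of_two_le_sum hs
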